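/- Let G be a finite group, p a prime, x a p-element of G, and Z = Z(G) the center of G. Then spr_G(x) = spr_{G/Z}(xZ). -/

import Mathlib

open Subgroup

/-- `H` is normal in `K` (both subgroups of an ambient group). -/
def NormalIn {G : Type*} [Group G] (H K : Subgroup G) : Prop :=
  H ≤ K ∧ (H.subgroupOf K).Normal

/-- `H` is subnormal in `K`: there is a chain `H = H₀ ⊴ H₁ ⊴ ⋯ ⊴ Hₙ = K`. -/
def IsSubnormalIn {G : Type*} [Group G] (H K : Subgroup G) : Prop :=
  Relation.ReflTransGen NormalIn H K

/-- The Wielandt subnormalizer of `⟨x⟩` in `G`. -/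
def subnormalizerSet {G : Type*} [Group G] (x : G) : Set G :=
  {g : G | IsSubnormalIn (zpowers x) (zpowers x ⊔ zpowers g)}

/-- `spr_G(x) = |S_G(x)|/|G|`. -/
noncomputable def spr {G : Type*} [Group G] (x : G) : ℚ :=
  (Nat.card (subnormalizerSet x) : ℚ) / (Nat.card G : ℚ)


/-- `x` is a `p`-element: its order is a power of `p`. -/
def IsPElement (p : ℕ) {G : Type*} [Group G] (x : G) : Prop :=
  ∃ k : ℕ, orderOf x = p ^ k

/-!
Modulo a central subgroup `N`, subnormality of `⟨x⟩` in `⟨x, g⟩` is preserved by the quotient map.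
Conversely, pulling back a subnormal chain from `G ⧸ N` gives a chain from `⟨x⟩N ∩ ⟨x, g⟩` up to
`⟨x, g⟩`, and `⟨x⟩` is normal in its first term because `⟨x⟩N` centralizes `x`. Hence `S_G(x)` is
the full preimage of `S_{G/N}(xN)`, so both `|S_G(x)|` and `|G|` are `|N|` times their images.
-/

section Subnormal

variable {G G' : Type*} [Group G] [Group G']

lemma normalIn_iff {H K : Subgroup G} :
    NormalIn H K ↔ H ≤ K ∧ ∀ h ∈ H, ∀ k ∈ K, k * h * k⁻¹ ∈ H := by
  constructor
  · rintro ⟨hle, hn⟩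
    refine ⟨hle, fun h hh k hk => ?_⟩
    have hh' : (⟨h, hle hh⟩ : K) ∈ H.subgroupOf K := by simpa [mem_subgroupOf] using hh
    simpa [mem_subgroupOf] using hn.conj_mem _ hh' ⟨k, hk⟩
  · rintro ⟨hle, hn⟩
    refine ⟨hle, ⟨fun n hn' g => ?_⟩⟩
    simp only [mem_subgroupOf] at hn' ⊢
    exact hn n hn' g g.2

lemma NormalIn.map (f : G →* G') {H K : Subgroup G} (h : NormalIn H K) :
    NormalIn (H.map f) (K.map f) := by
  rw [normalIn_iff] at h ⊢
  refine ⟨map_mono h.1, ?_⟩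
  rintro _ ⟨a, ha, rfl⟩ _ ⟨b, hb, rfl⟩
  exact ⟨b * a * b⁻¹, h.2 a ha b hb, by simp⟩

lemma NormalIn.comap (f : G →* G') {H K : Subgroup G'} (h : NormalIn H K) :
    NormalIn (H.comap f) (K.comap f) := by
  rw [normalIn_iff] at h ⊢
  refine ⟨comap_mono h.1, fun a ha b hb => ?_⟩
  simpa only [mem_comap, map_mul, map_inv] using h.2 _ ha _ hb

lemma NormalIn.inf_right {H K : Subgroup G} (L : Subgroup G) (h : NormalIn H K) :
    NormalIn (H ⊓ L) (K ⊓ L) := by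
  rw [normalIn_iff] at h ⊢
  refine ⟨inf_le_inf_right _ h.1, ?_⟩
  rintro a ⟨haH, haL⟩ b ⟨hbK, hbL⟩
  exact ⟨h.2 a haH b hbK, L.mul_mem (L.mul_mem hbL haL) (L.inv_mem hbL)⟩

lemma normalIn_zpowers_of_le_centralizer {x : G} {K : Subgroup G} (hxK : zpowers x ≤ K)
    (hK : K ≤ centralizer {x}) : NormalIn (zpowers x) K := by
  refine normalIn_iff.2 ⟨hxK, ?_⟩
  rintro _ ⟨m, rfl⟩ k hk
  have hkx : Commute k x := mem_centralizer_singleton_iff.1 (hK hk)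
  simp only [(hkx.zpow_right m).eq, mul_inv_cancel_right]
  exact zpow_mem_zpowers x m

lemma IsSubnormalIn.map (f : G →* G') {H K : Subgroup G} (h : IsSubnormalIn H K) :
    IsSubnormalIn (H.map f) (K.map f) :=
  h.lift (Subgroup.map f) fun _ _ => NormalIn.map f

lemma IsSubnormalIn.comap (f : G →* G') {H K : Subgroup G'} (h : IsSubnormalIn H K) :
    IsSubnormalIn (H.comap f) (K.comap f) :=
  h.lift (Subgroup.comap f) fun _ _ => NormalIn.comap f

lemma IsSubnormalIn.inf_right {H K : Subgroup G} (L : Subgroup G) (h : IsSubnormalIn H K) :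
    IsSubnormalIn (H ⊓ L) (K ⊓ L) :=
  h.lift (· ⊓ L) fun _ _ => NormalIn.inf_right L

end Subnormal

section CentralQuotient

variable {G : Type*} [Group G] (N : Subgroup G) [N.Normal]

lemma mk_mem_subnormalizerSet_mk {x g : G} (h : g ∈ subnormalizerSet x) :
    (g : G ⧸ N) ∈ subnormalizerSet (x : G ⧸ N) := by
  simpa [subnormalizerSet, Subgroup.map_sup, MonoidHom.map_zpowers] using
    IsSubnormalIn.map (QuotientGroup.mk' N) h

lemma mem_subnormalizerSet_of_mk_mem (hN : N ≤ center G) {x g : G}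
    (h : (g : G ⧸ N) ∈ subnormalizerSet (x : G ⧸ N)) : g ∈ subnormalizerSet x := by
  rw [subnormalizerSet, Set.mem_ofPred_eq] at h
  set π := QuotientGroup.mk' N
  set M := zpowers x ⊔ zpowers g
  have hx : (zpowers (x : G ⧸ N)).comap π = zpowers x ⊔ N := by
    rw [show (x : G ⧸ N) = π x from rfl, ← MonoidHom.map_zpowers, comap_map_eq,
      QuotientGroup.ker_mk']
  have hxg : (zpowers (x : G ⧸ N) ⊔ zpowers (g : G ⧸ N)).comap π = M ⊔ N := by
    rw [show (x : G ⧸ N) = π x from rfl, show (g : G ⧸ N) = π g from rfl,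
      ← MonoidHom.map_zpowers, ← MonoidHom.map_zpowers, ← Subgroup.map_sup, comap_map_eq,
      QuotientGroup.ker_mk']
  have hchain : IsSubnormalIn ((zpowers x ⊔ N) ⊓ M) M := by
    have := (IsSubnormalIn.comap π h).inf_right M
    rwa [hx, hxg, inf_eq_right.2 (le_sup_left : M ≤ M ⊔ N)] at this
  have hcent : zpowers x ⊔ N ≤ centralizer {x} :=
    sup_le (zpowers_le.2 (mem_centralizer_singleton_iff.2 (Commute.refl x).eq))
      (hN.trans (center_le_centralizer _))
  have hbottom : NormalIn (zpowers x) ((zpowers x ⊔ N) ⊓ M) :=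
    normalIn_zpowers_of_le_centralizer (le_inf le_sup_left le_sup_left) (inf_le_left.trans hcent)
  exact Relation.ReflTransGen.head hbottom hchain

lemma subnormalizerSet_eq_preimage_mk (hN : N ≤ center G) (x : G) :
    subnormalizerSet x = (↑) ⁻¹' subnormalizerSet (x : G ⧸ N) :=
  Set.ext fun _ => ⟨mk_mem_subnormalizerSet_mk N, mem_subnormalizerSet_of_mk_mem N hN⟩

lemma spr_mk_of_le_center [Finite G] (hN : N ≤ center G) (x : G) :
    spr (x : G ⧸ N) = spr x := by
  have hS : Nat.card (subnormalizerSet x) =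
      Nat.card N * Nat.card (subnormalizerSet (x : G ⧸ N)) := by
    rw [subnormalizerSet_eq_preimage_mk N hN, Nat.card_congr
      (QuotientGroup.preimageMkEquivSubgroupProdSet N _), Nat.card_prod]
  have hN0 : (Nat.card N : ℚ) ≠ 0 := by exact_mod_cast Nat.card_pos.ne'
  rw [spr, spr, hS, card_eq_card_quotient_mul_card_subgroup N]
  push_cast
  rw [mul_comm (Nat.card (G ⧸ N) : ℚ), mul_div_mul_left _ _ hN0]

end CentralQuotient

theorem stmt7_general {G : Type*} [Group G] [Finite G]
    (x : G) :
    spr x = spr (QuotientGroup.mk x : G ⧸ Subgroup.center G) :=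
  (spr_mk_of_le_center (center G) le_rfl x).symm

theorem stmt7 {G : Type*} [Group G] [Finite G] (p : ℕ) (hp : p.Prime)
    (x : G) (hxp : IsPElement p x) :
    spr x = spr (QuotientGroup.mk x : G ⧸ Subgroup.center G) :=
  stmt7_general x
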